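/- arXiv:1608.07881 — 3 statements merged into one kernel-verified Lean document; each statement's English description precedes it below -/
import Mathlib

section
/- The degree of blame dB(s,α) = Σ_{s' ∈ Suc(s,α)} dR(s') · P_α(s,s') of an action α at state s is bounded above by the total probability P(CX) of the counterexample, with equality if and only if every path σ in CX contains a transition (s,α,s') for some s' with dR(s') = 1 (i.e., s' is critical). -/
open scoped Classical

/-- The list of transitions `(s, α, s')` of a finite path given by a start
state and a list of (action, next-state) steps. -/
def transOf {S A : Type*} : S → List (A × S) → List (S × A × S)
  | _, [] => []
  | s, (a, t) :: rest => (s, a, t) :: transOf t rest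

/-- The list of states visited by a finite path. -/
def statesOf {S A : Type*} (s : S) (l : List (A × S)) : List S :=
  s :: l.map Prod.snd

/-- A finite path: a start state together with a list of (action, state) steps. -/
abbrev FPath (S A : Type*) := S × List (A × S)

/-- `Pr CX P s`: the sum of the probabilities of the paths of `CX` containing state `s`. -/
noncomputable def Pr {S A : Type*} (CX : Finset (FPath S A)) (P : FPath S A → ℝ) (s : S) : ℝ :=
  ∑ σ ∈ CX.filter (fun σ => s ∈ statesOf σ.1 σ.2), P σ

/-- `Pa CX P s α s'`: the sum of the probabilities of the paths of `CX`
containing the transition `(s, α, s')`. -/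
noncomputable def Pa {S A : Type*} (CX : Finset (FPath S A)) (P : FPath S A → ℝ)
    (s : S) (α : A) (s' : S) : ℝ :=
  ∑ σ ∈ CX.filter (fun σ => (s, α, s') ∈ transOf σ.1 σ.2), P σ

/-- `Suc CX s α`: the set of `α`-successors of `s` occurring in the paths of `CX`. -/
noncomputable def Suc {S A : Type*} (CX : Finset (FPath S A)) (s : S) (α : A) : Finset S :=
  CX.biUnion fun σ =>
    (((transOf σ.1 σ.2).filter (fun t => t.1 = s ∧ t.2.1 = α)).map (fun t => t.2.2)).toFinset

/-- The degree of blame `dB(s,α) = Σ_{s' ∈ Suc(s,α)} dR(s') · P_α(s,s')`. -/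
noncomputable def dB {S A : Type*} (CX : Finset (FPath S A)) (P : FPath S A → ℝ)
    (dR : S → ℝ) (s : S) (α : A) : ℝ :=
  ∑ s' ∈ Suc CX s α, dR s' * Pa CX P s α s'

lemma mem_Suc_of_trans {S A : Type*} {CX : Finset (FPath S A)} {σ : FPath S A}
    (hσ : σ ∈ CX) {s s' : S} {α : A} (h : (s, α, s') ∈ transOf σ.1 σ.2) :
    s' ∈ Suc CX s α := by
  classical
  simp only [Suc, Finset.mem_biUnion]
  refine ⟨σ, hσ, ?_⟩
  simp only [List.mem_toFinset, List.mem_map, List.mem_filter]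
  exact ⟨(s, α, s'), ⟨h, by simp⟩, rfl⟩

lemma dB_eq_sum {S A : Type*} (CX : Finset (FPath S A)) (P : FPath S A → ℝ)
    (dR : S → ℝ) (s : S) (α : A) :
    dB CX P dR s α =
      ∑ σ ∈ CX, (∑ s' ∈ (Suc CX s α).filter
        (fun s' => (s, α, s') ∈ transOf σ.1 σ.2), dR s') * P σ := by
  classical
  simp only [dB, Pa, Finset.sum_filter, Finset.mul_sum, Finset.sum_mul, mul_ite, mul_zero,
    ite_mul, zero_mul]
  rw [Finset.sum_comm]

/-- the degree of blame `dB(s,α)` is bounded above by the total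
probability `P(CX)` of the counterexample, with equality iff every path of `CX`
contains a transition `(s,α,s')` for some `s'` with `dR(s') = 1` (a critical state). -/
theorem stmt2 {S A : Type*} (CX : Finset (FPath S A)) (P : FPath S A → ℝ)
    (dR : S → ℝ)
    (hP : ∀ σ ∈ CX, 0 < P σ)
    (hloopfree : ∀ σ ∈ CX, (statesOf σ.1 σ.2).Nodup)
    (hdR : ∀ s : S, 0 < dR s ∧ dR s ≤ 1)
    (s : S) (α : A)
    (honce : ∀ σ ∈ CX, ∀ s₁ s₂ : S,
      (s, α, s₁) ∈ transOf σ.1 σ.2 → (s, α, s₂) ∈ transOf σ.1 σ.2 → s₁ = s₂) :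
    dB CX P dR s α ≤ ∑ σ ∈ CX, P σ ∧
      (dB CX P dR s α = ∑ σ ∈ CX, P σ ↔
        ∀ σ ∈ CX, ∃ s' : S, (s, α, s') ∈ transOf σ.1 σ.2 ∧ dR s' = 1) := by
  classical
  set f : FPath S A → ℝ := fun σ =>
    ∑ s' ∈ (Suc CX s α).filter (fun s' => (s, α, s') ∈ transOf σ.1 σ.2), dR s' with hf
  have key : ∀ σ ∈ CX, (∀ s' : S, (s, α, s') ∉ transOf σ.1 σ.2) → f σ = 0 := by
    intro σ hσ h
    rw [hf]
    apply Finset.sum_eq_zero_iff_of_nonneg (fun s' _ => le_of_lt (hdR s').1) |>.mpr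
    intro s' hs'
    exact absurd (Finset.mem_filter.mp hs').2 (h s')
  have key2 : ∀ σ ∈ CX, ∀ s' : S, (s, α, s') ∈ transOf σ.1 σ.2 → f σ = dR s' := by
    intro σ hσ s' h
    simp only [hf]
    have : (Suc CX s α).filter (fun t => (s, α, t) ∈ transOf σ.1 σ.2) = {s'} := by
      ext x
      simp only [Finset.mem_filter, Finset.mem_singleton]
      constructor
      · rintro ⟨_, hx⟩; exact honce σ hσ x s' hx h
      · rintro rfl; exact ⟨mem_Suc_of_trans hσ h, h⟩
    rw [this, Finset.sum_singleton]
  have hfle : ∀ σ ∈ CX, f σ ≤ 1 := by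
    intro σ hσ
    by_cases h : ∃ s', (s, α, s') ∈ transOf σ.1 σ.2
    · obtain ⟨s', hs'⟩ := h
      rw [key2 σ hσ s' hs']; exact (hdR s').2
    · push_neg at h
      rw [key σ hσ h]; norm_num
  have hle : ∀ σ ∈ CX, f σ * P σ ≤ P σ := fun σ hσ => by
    calc f σ * P σ ≤ 1 * P σ :=
          mul_le_mul_of_nonneg_right (hfle σ hσ) (hP σ hσ).le
      _ = P σ := one_mul _
  rw [dB_eq_sum]
  constructor
  · exact Finset.sum_le_sum hle
  · rw [Finset.sum_eq_sum_iff_of_le hle]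
    constructor
    · intro h σ hσ
      have heq := h σ hσ
      have hf1 : f σ = 1 :=
        mul_right_cancel₀ (ne_of_gt (hP σ hσ))
          (show f σ * P σ = 1 * P σ by rw [one_mul, heq])
      by_cases hex : ∃ s', (s, α, s') ∈ transOf σ.1 σ.2
      · obtain ⟨s', hs'⟩ := hex
        exact ⟨s', hs', by rw [← key2 σ hσ s' hs', hf1]⟩
      · push_neg at hex
        rw [key σ hσ hex] at hf1; norm_num at hf1
    · intro h σ hσ
      obtain ⟨s', hs', hd⟩ := h σ hσ
      rw [key2 σ hσ s' hs', hd, one_mul]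
end

section
/- It is not the case that an action leading to a most responsible cause necessarily has the most blame: there exists a counterexample structure with states s₁, s₂, actions α₁ ∈ A(s₁), α₂ ∈ A(s₂), responsibilities and probabilities such that α₁ leads to the unique most responsible cause (maximizing dR(C)·Pr(C)) yet dB(s₂,α₂) > dB(s₁,α₁). -/
open scoped Classical

/-- an action leading to the unique most responsible cause need not
have the most blame: there is a counterexample structure (a finite set of
positively weighted paths, with responsibilities in `(0,1]`), states `s₁, s₂`,
actions `α₁, α₂`, and a cause state `c` reached from `s₁` under `α₁` that is the
unique maximizer of `dR(C)·Pr(C)` among states occurring in `CX`, while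
`dB(s₂,α₂) > dB(s₁,α₁)`. -/
theorem stmt3 :
    ∃ (S A : Type) (CX : Finset (FPath S A)) (P : FPath S A → ℝ) (dR : S → ℝ)
      (s₁ s₂ : S) (α₁ α₂ : A) (c : S),
      (∀ σ ∈ CX, 0 < P σ) ∧
      (∀ s : S, 0 < dR s ∧ dR s ≤ 1) ∧
      -- α₁ leads (from s₁) to the cause c
      (∃ σ ∈ CX, (s₁, α₁, c) ∈ transOf σ.1 σ.2) ∧
      -- c is the unique most responsible cause among states occurring in CX
      (∀ c' : S, (∃ σ ∈ CX, c' ∈ statesOf σ.1 σ.2) → c' ≠ c →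
        dR c' * Pr CX P c' < dR c * Pr CX P c) ∧
      (∃ σ ∈ CX, c ∈ statesOf σ.1 σ.2) ∧
      -- yet α₂ at s₂ has strictly more blame than α₁ at s₁
      dB CX P dR s₁ α₁ < dB CX P dR s₂ α₂ := by
  refine ⟨Fin 5, Fin 2,
    {((0 : Fin 5), [((0 : Fin 2), (1 : Fin 5))]),
     ((2 : Fin 5), [((1 : Fin 2), (3 : Fin 5))]),
     ((2 : Fin 5), [((1 : Fin 2), (4 : Fin 5))])},
    fun _ => 1, ![1/2, 1, 1/4, 3/4, 3/4], 0, 2, 0, 1, 1, ?_, ?_, ?_, ?_, ?_, ?_⟩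
  · intro σ _; norm_num
  · intro s; fin_cases s <;> norm_num
  · exact ⟨(0, [(0, 1)]), by decide, by decide⟩
  · intro c' hc' hne
    fin_cases c' <;> simp_all [Pr, statesOf, Finset.filter_insert, Finset.filter_singleton,
      Finset.sum_insert, Fin.isValue] <;> norm_num
  · exact ⟨(0, [(0, 1)]), by decide, by decide⟩
  · have h1 : Suc {((0 : Fin 5), [((0 : Fin 2), (1 : Fin 5))]),
        ((2 : Fin 5), [((1 : Fin 2), (3 : Fin 5))]),
        ((2 : Fin 5), [((1 : Fin 2), (4 : Fin 5))])} (0 : Fin 5) (0 : Fin 2) = {1} := by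
      ext x; simp [Suc, transOf]
    have h2 : Suc {((0 : Fin 5), [((0 : Fin 2), (1 : Fin 5))]),
        ((2 : Fin 5), [((1 : Fin 2), (3 : Fin 5))]),
        ((2 : Fin 5), [((1 : Fin 2), (4 : Fin 5))])} (2 : Fin 5) (1 : Fin 2) = {3, 4} := by
      ext x; simp [Suc, transOf]
    rw [dB, dB, h1, h2, Finset.sum_singleton,
      Finset.sum_insert (by decide), Finset.sum_singleton]
    simp [Pa, transOf, Finset.filter_insert, Finset.filter_singleton]
    norm_num
end

section
/- If in every path of the counterexample CX each occurrence of state s (not as last state) is followed by a transition under action α, then Σ_{s' ∈ Suc(s,α)} P_α(s,s') = Pr(s) − Pr_last(s), where Pr_last(s) is the total probability of paths in CX in which s is the last state. -/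
open scoped Classical

/-- The last state of a finite path. -/
def lastOf {S A : Type*} (s : S) (l : List (A × S)) : S :=
  (statesOf s l).getLast (by simp [statesOf])

lemma mem_statesOf_of_trans {S A : Type*} {s : S} {a : A} {t : S} :
    ∀ (x : S) (l : List (A × S)), (s, a, t) ∈ transOf x l → s ∈ statesOf x l := by
  intro x l
  induction l generalizing x with
  | nil => simp [transOf]
  | cons p rest ih =>
    obtain ⟨b, u⟩ := p
    intro h
    simp only [transOf, List.mem_cons] at h
    rcases h with h | h
    · rw [Prod.mk.injEq] at h
      simp [statesOf, h.1]
    · have := ih u h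
      simp only [statesOf, List.mem_cons, List.map_cons] at this ⊢
      tauto

lemma lastOf_mem {S A : Type*} (x : S) (l : List (A × S)) :
    lastOf x l ∈ statesOf x l :=
  List.getLast_mem _

lemma src_ne_last {S A : Type*} {s : S} {a : A} {t : S} :
    ∀ (x : S) (l : List (A × S)), (statesOf x l).Nodup →
      (s, a, t) ∈ transOf x l → s ≠ lastOf x l := by
  intro x l
  induction l generalizing x with
  | nil => simp [transOf]
  | cons p rest ih =>
    obtain ⟨b, u⟩ := p
    intro hnd h
    simp only [transOf, List.mem_cons] at h
    have hlast : lastOf x ((b, u) :: rest) = lastOf u rest := by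
      simp only [lastOf, statesOf, List.map_cons]
      rw [List.getLast_cons]
    have hnd' : (statesOf u rest).Nodup := by
      simp only [statesOf, List.map_cons, List.nodup_cons, List.mem_cons] at hnd ⊢; tauto
    have hxnot : x ∉ statesOf u rest := by
      simp only [statesOf, List.map_cons, List.nodup_cons, List.mem_cons] at hnd ⊢
      tauto
    rcases h with h | h
    · rw [Prod.mk.injEq] at h
      rw [hlast, h.1]
      intro hc
      exact hxnot (hc ▸ lastOf_mem u rest)
    · rw [hlast]
      exact ih u hnd' h

lemma trans_unique {S A : Type*} {s : S} {a b : A} {t u : S} :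
    ∀ (x : S) (l : List (A × S)), (statesOf x l).Nodup →
      (s, a, t) ∈ transOf x l → (s, b, u) ∈ transOf x l → a = b ∧ t = u := by
  intro x l
  induction l generalizing x with
  | nil => simp [transOf]
  | cons p rest ih =>
    obtain ⟨c, v⟩ := p
    intro hnd h1 h2
    simp only [transOf, List.mem_cons] at h1 h2
    have hxnot : x ∉ statesOf v rest := by
      simp only [statesOf, List.map_cons, List.nodup_cons, List.mem_cons] at hnd ⊢
      tauto
    have hnd' : (statesOf v rest).Nodup := by
      simp only [statesOf, List.map_cons, List.nodup_cons, List.mem_cons] at hnd ⊢; tauto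
    rcases h1 with h1 | h1 <;> rcases h2 with h2 | h2
    · rw [Prod.mk.injEq, Prod.mk.injEq] at h1 h2
      exact ⟨h1.2.1.trans h2.2.1.symm, h1.2.2.trans h2.2.2.symm⟩
    · rw [Prod.mk.injEq] at h1
      exact absurd (h1.1 ▸ mem_statesOf_of_trans v rest h2) hxnot
    · rw [Prod.mk.injEq] at h2
      exact absurd (h2.1 ▸ mem_statesOf_of_trans v rest h1) hxnot
    · exact ih v hnd' h1 h2

lemma mem_Suc {S A : Type*} {CX : Finset (FPath S A)} {s t : S} {α : A} {σ : FPath S A}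
    (hσ : σ ∈ CX) (h : (s, α, t) ∈ transOf σ.1 σ.2) : t ∈ Suc CX s α := by
  rw [Suc, Finset.mem_biUnion]
  refine ⟨σ, hσ, ?_⟩
  rw [List.mem_toFinset, List.mem_map]
  exact ⟨(s, α, t), List.mem_filter.mpr ⟨h, by simp⟩, rfl⟩

/-- if in every path of `CX` each occurrence of state `s` that is
not as the last state is followed by a transition under action `α`, then
`Σ_{s' ∈ Suc(s,α)} P_α(s,s') = Pr(s) − Pr_last(s)`, where `Pr_last(s)` is the
total probability of the paths of `CX` in which `s` is the last state. -/
theorem stmt10 {S A : Type*} (CX : Finset (FPath S A)) (P : FPath S A → ℝ)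
    (hP : ∀ σ ∈ CX, 0 < P σ)
    (hloopfree : ∀ σ ∈ CX, (statesOf σ.1 σ.2).Nodup)
    (s : S) (α : A)
    (hfollow : ∀ σ ∈ CX, s ∈ statesOf σ.1 σ.2 → s ≠ lastOf σ.1 σ.2 →
      ∃ s' : S, (s, α, s') ∈ transOf σ.1 σ.2) :
    ∑ s' ∈ Suc CX s α, Pa CX P s α s' =
      Pr CX P s - ∑ σ ∈ CX.filter (fun σ => lastOf σ.1 σ.2 = s), P σ := by
  classical
  have hrw : ∀ s', Pa CX P s α s' =
      ∑ σ ∈ CX, if (s, α, s') ∈ transOf σ.1 σ.2 then P σ else 0 := by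
    intro s'; rw [Pa, Finset.sum_filter]
  calc ∑ s' ∈ Suc CX s α, Pa CX P s α s'
      = ∑ σ ∈ CX, ∑ s' ∈ Suc CX s α,
          if (s, α, s') ∈ transOf σ.1 σ.2 then P σ else 0 := by
        simp_rw [hrw]; rw [Finset.sum_comm]
    _ = ∑ σ ∈ CX, if s ∈ statesOf σ.1 σ.2 ∧ s ≠ lastOf σ.1 σ.2 then P σ else 0 := by
        apply Finset.sum_congr rfl
        intro σ hσ
        by_cases hc : s ∈ statesOf σ.1 σ.2 ∧ s ≠ lastOf σ.1 σ.2
        · obtain ⟨t, ht⟩ := hfollow σ hσ hc.1 hc.2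
          rw [if_pos hc, Finset.sum_eq_single_of_mem t (mem_Suc hσ ht)]
          · rw [if_pos ht]
          · intro u _ hu
            rw [if_neg]
            intro hmem
            exact hu (trans_unique σ.1 σ.2 (hloopfree σ hσ) hmem ht).2
        · rw [if_neg hc]
          apply Finset.sum_eq_zero
          intro u _
          rw [if_neg]
          intro hmem
          exact hc ⟨mem_statesOf_of_trans _ _ hmem,
            src_ne_last _ _ (hloopfree σ hσ) hmem⟩
    _ = ∑ σ ∈ CX.filter (fun σ => s ∈ statesOf σ.1 σ.2 ∧ s ≠ lastOf σ.1 σ.2), P σ :=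
        (Finset.sum_filter _ _).symm
    _ = Pr CX P s - ∑ σ ∈ CX.filter (fun σ => lastOf σ.1 σ.2 = s), P σ := by
        have hsplit := Finset.sum_filter_add_sum_filter_not
          (CX.filter (fun σ => s ∈ statesOf σ.1 σ.2)) (fun σ => lastOf σ.1 σ.2 = s) P
        rw [Finset.filter_filter, Finset.filter_filter] at hsplit
        have h1 : CX.filter (fun σ => s ∈ statesOf σ.1 σ.2 ∧ lastOf σ.1 σ.2 = s)
            = CX.filter (fun σ => lastOf σ.1 σ.2 = s) := by
          apply Finset.filter_congr
          intro σ _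

          exact ⟨fun h => h.2, fun h => ⟨h ▸ lastOf_mem σ.1 σ.2, h⟩⟩
        have h2 : CX.filter (fun σ => s ∈ statesOf σ.1 σ.2 ∧ ¬lastOf σ.1 σ.2 = s)
            = CX.filter (fun σ => s ∈ statesOf σ.1 σ.2 ∧ s ≠ lastOf σ.1 σ.2) := by
          apply Finset.filter_congr
          intro σ _
          simp only [ne_eq]
          constructor
          · exact fun h => ⟨h.1, fun hc => h.2 hc.symm⟩
          · exact fun h => ⟨h.1, fun hc => h.2 hc.symm⟩
        rw [h1, h2] at hsplit
        rw [Pr]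
        linarith [hsplit]
end
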